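/- arXiv:1908.03474 — 3 statements merged into one kernel-verified Lean document; each statement's English description precedes it below -/
import Mathlib

section
/- The character of G induced from the trivial character of the normal subgroup Z_p equals the sum of the p−1 linear irreducible characters of G, i.e. Ind_{Z_p}^G(1_{Z_p}) = Σ_{i∈I} ψ_i; and for every nontrivial irreducible character η of Z_p ≅ ZMod p, the induced character Ind_{Z_p}^G(η) equals ψ_r, the unique irreducible character of G of degree p−1 (in particular this induced character is irreducible). -/
open scoped Classical

noncomputable section

namespace BrGrFormal

/-! ### The groups `H = (ZMod p)ˣ` and `G = ZMod p ⋊ (ZMod p)ˣ` -/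

/-- The action of `(ZMod p)ˣ` on the (multiplicatively written) additive group `ZMod p`,
by multiplication. -/
def mulAction (p : ℕ) : (ZMod p)ˣ →* MulAut (Multiplicative (ZMod p)) where
  toFun u :=
    { toFun := fun z => Multiplicative.ofAdd (u • z.toAdd)
      invFun := fun z => Multiplicative.ofAdd (u⁻¹ • z.toAdd)
      left_inv := fun z => by simp
      right_inv := fun z => by simp
      map_mul' := fun z w => by simp [toAdd_mul, smul_add, ofAdd_add] }
  map_one' := by ext z; simp
  map_mul' := fun u v => by ext z; simp [mul_smul]

/-- The group `G = ZMod p ⋊ (ZMod p)ˣ`. -/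
abbrev Gp (p : ℕ) := Multiplicative (ZMod p) ⋊[mulAction p] (ZMod p)ˣ

instance {N G : Type*} [Group N] [Group G] {φ : G →* MulAut N} [Fintype N] [Fintype G] :
    Fintype (N ⋊[φ] G) :=
  Fintype.ofEquiv (N × G)
    { toFun := fun x => ⟨x.1, x.2⟩
      invFun := fun g => (g.left, g.right)
      left_inv := fun _ => rfl
      right_inv := fun _ => rfl }

/-! ### Characters -/

/-- `χ : G → ℂ` is an irreducible (complex) character of the group `G` if it is the
character of some irreducible (simple) finite-dimensional complex representation of `G`. -/
def IsIrrChar (G : Type) [Group G] (χ : G → ℂ) : Prop :=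
  ∃ V : FDRep ℂ G, CategoryTheory.Simple V ∧ χ = fun g => V.character g

/-- The usual inner product of class functions on a finite group. -/
def cfInner (Γ : Type) [Group Γ] [Fintype Γ] (u v : Γ → ℂ) : ℂ :=
  (Fintype.card Γ : ℂ)⁻¹ * ∑ g : Γ, u g * (starRingEnd ℂ) (v g)

/-- Induction of a class function along an (injective) group homomorphism `φ : K →* Γ`:
`Ind_K^Γ ψ (g) = |K|⁻¹ ∑_{x ∈ Γ} ∑_{y ∈ K, φ y = x⁻¹gx} ψ (y)`. -/
def indHom {K Γ : Type} [Group K] [Fintype K] [Group Γ] [Fintype Γ]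
    (φ : K →* Γ) (ψ : K → ℂ) : Γ → ℂ :=
  fun g => (Fintype.card K : ℂ)⁻¹ * ∑ x : Γ, ∑ y : K, if φ y = x⁻¹ * g * x then ψ y else 0

/-- Induction of a class function from a subgroup:
`Ind_K^Γ ψ (g) = |K|⁻¹ ∑_{x ∈ Γ, x⁻¹gx ∈ K} ψ (x⁻¹gx)`. -/
def indSub {Γ : Type} [Group Γ] [Fintype Γ] (K : Subgroup Γ) (ψ : Γ → ℂ) : Γ → ℂ :=
  fun g => (Nat.card K : ℂ)⁻¹ * ∑ x : Γ, if x⁻¹ * g * x ∈ K then ψ (x⁻¹ * g * x) else 0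

/-!
Both induced characters vanish off the normal subgroup `Z_p`, and on `Z_p` the conjugates of
`inl z` are the `inl (u • z)`, `u ∈ (ZMod p)ˣ`, each taken `p` times. Hence `Ind 1 = p - 1` on
`Z_p`, which is the sum of the linear characters of `H` evaluated at `1`; and
`Ind η (inl z) = ∑ᵤ η (u z)` is `p - 1` at `z = 0` and `-1` otherwise, because a nontrivial `η`
sums to zero over `ZMod p`.

An irreducible `ψ` of degree `p - 1 ≠ 1` is orthogonal to all linear characters `θ ∘ ϖ`, so by
Fourier inversion on `H` it sums to zero over every coset of `Z_p`. A coset `Z_p u` with `u ≠ 1`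
is one conjugacy class, so `ψ` vanishes there; the elements `z ≠ 0` of `Z_p` are all conjugate,
so the vanishing sum over `Z_p` forces `ψ = -1` on them. So `ψ` has the values of `Ind η`.
-/

section LinearCharacters

open CategoryTheory Module

variable {Γ : Type} [Group Γ]

def linearFDRep (t : Γ →* ℂˣ) : FDRep ℂ Γ :=
  FDRep.of ((algebraMap ℂ (Module.End ℂ ℂ)).toMonoidHom.comp ((Units.coeHom ℂ).comp t))

lemma character_eq_of_ρ_eq_smul {V : FDRep ℂ Γ} {g : Γ} {c : ℂ}
    (h : V.ρ g = c • LinearMap.id) : V.character g = c * finrank ℂ V := by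
  simp [FDRep.character, h]

lemma character_linearFDRep (t : Γ →* ℂˣ) (g : Γ) : (linearFDRep t).character g = t g := by
  rw [character_eq_of_ρ_eq_smul (Algebra.algebraMap_eq_smul_one (A := Module.End ℂ ℂ) (t g : ℂ)),
    show finrank ℂ (linearFDRep t) = 1 from finrank_self ℂ, Nat.cast_one, mul_one]

variable [Fintype Γ]

instance simple_linearFDRep (t : Γ →* ℂˣ) : Simple (linearFDRep t) := by
  rw [FDRep.simple_iff_char_is_norm_one]
  simp [character_linearFDRep, Nat.card_eq_fintype_card]

lemma isIrrChar_monoidHom (t : Γ →* ℂˣ) : IsIrrChar Γ (fun g => (t g : ℂ)) :=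
  ⟨linearFDRep t, inferInstance, funext fun g => (character_linearFDRep t g).symm⟩

lemma sum_character_mul_monoidHom_eq_zero (V : FDRep ℂ Γ) [Simple V] (hV : V.character 1 ≠ 1)
    (t : Γ →* ℂˣ) : ∑ g, V.character g * t g = 0 := by
  have hnotiso : ¬ Nonempty (V ≅ linearFDRep t⁻¹) := fun ⟨i⟩ => hV <| by
    rw [FDRep.char_iso i, character_linearFDRep, map_one, Units.val_one]
  have := FDRep.char_orthonormal V (linearFDRep t⁻¹)
  simpa [hnotiso, character_linearFDRep] using this

end LinearCharacters

section CommGroup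

open CategoryTheory Module

variable {Γ : Type} [CommGroup Γ] [Fintype Γ]

lemma exists_monoidHom_character_eq (V : FDRep ℂ Γ) [Simple V] :
    ∃ t : Γ →* ℂˣ, ∀ g, V.character g = t g := by
  -- Schur: since `Γ` is commutative, each `ρ g` is an endomorphism of the simple `V`, hence a
  -- scalar; the norm-one criterion for simplicity then forces `V` to be one-dimensional.
  have hscalar : ∀ g, ∃ c : ℂ, V.ρ g = c • LinearMap.id := fun g => by
    let ρg : V ⟶ V :=
      { hom := Action.ρ V g
        comm := fun h => by
          ext v
          change V.ρ g (V.ρ h v) = V.ρ h (V.ρ g v)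
          rw [← Module.End.mul_apply, ← map_mul, mul_comm, map_mul, Module.End.mul_apply] }
    obtain ⟨c, hc⟩ := (finrank_eq_one_iff_of_nonzero' (𝟙 V) (id_nonzero V)).mp
      (finrank_endomorphism_simple_eq_one ℂ V) ρg
    exact ⟨c, LinearMap.ext fun v => (congrArg (fun φ : V ⟶ V => φ.hom.hom.hom v) hc).symm⟩
  choose c hc using hscalar
  set d : ℕ := finrank ℂ V
  have hchar g : V.character g = c g * d := character_eq_of_ρ_eq_smul (hc g)
  have hnorm := (FDRep.simple_iff_char_is_norm_one V).mp ‹_›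
  have hd0 : d ≠ 0 := fun hd => by
    simp only [hchar, hd, CharP.cast_eq_zero, mul_zero, Finset.sum_const_zero,
      Nat.card_eq_fintype_card] at hnorm
    exact Fintype.card_ne_zero (by exact_mod_cast hnorm.symm)
  have : Nontrivial V := Module.nontrivial_of_finrank_pos (Nat.pos_of_ne_zero hd0)
  obtain ⟨v, hv⟩ := exists_ne (0 : V)
  have hρv g : V.ρ g v = c g • v := by rw [hc g]; rfl
  let t : Γ →* ℂ :=
    { toFun := c
      map_one' := smul_left_injective ℂ hv <| show c 1 • v = (1 : ℂ) • v by
        rw [← hρv, map_one, one_smul]; rfl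
      map_mul' := fun g h => smul_left_injective ℂ hv <| show c (g * h) • v = (c g * c h) • v by
        rw [← hρv, map_mul, Module.End.mul_apply, hρv, map_smul, hρv, smul_smul, mul_comm] }
  have hd : d = 1 := by
    have hinv g : c g * c g⁻¹ = 1 := (map_mul t g g⁻¹).symm.trans (by rw [mul_inv_cancel, map_one])
    simp only [hchar, mul_mul_mul_comm _ (d : ℂ), hinv, one_mul, Finset.sum_const,
      Finset.card_univ, nsmul_eq_mul, Nat.card_eq_fintype_card] at hnorm
    have hdd : ((d * d : ℕ) : ℂ) = 1 := by
      push_cast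
      exact (mul_eq_left₀ (Nat.cast_ne_zero.mpr Fintype.card_ne_zero)).mp hnorm
    exact Nat.eq_one_of_mul_eq_one_right (by exact_mod_cast hdd)
  exact ⟨t.toHomUnits, fun g => by simp [hchar, hd, t]⟩

lemma isIrrChar_iff_exists_monoidHom {χ : Γ → ℂ} :
    IsIrrChar Γ χ ↔ ∃ t : Γ →* ℂˣ, χ = fun g => (t g : ℂ) := by
  constructor
  · rintro ⟨V, _, rfl⟩
    obtain ⟨t, ht⟩ := exists_monoidHom_character_eq V
    exact ⟨t, funext ht⟩
  · rintro ⟨t, rfl⟩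
    exact isIrrChar_monoidHom t

lemma sum_monoidHom_apply [Fintype (Γ →* ℂˣ)] (g : Γ) :
    ∑ t : Γ →* ℂˣ, (t g : ℂ) = if g = 1 then (Nat.card Γ : ℂ) else 0 := by
  split_ifs with hg
  · simp [hg, ← Nat.card_eq_fintype_card,
      CommGroup.card_monoidHom_of_hasEnoughRootsOfUnity Γ ℂ]
  · obtain ⟨t, ht⟩ := CommGroup.exists_apply_ne_one_of_hasEnoughRootsOfUnity Γ ℂ hg
    refine sum_hom_units_eq_zero ((Units.coeHom ℂ).comp (MonoidHom.eval g)) fun h => ht ?_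
    exact Units.ext (DFunLike.congr_fun h t)

lemma sum_isIrrChar_apply (S : Finset (Γ → ℂ)) (hS : ∀ θ, θ ∈ S ↔ IsIrrChar Γ θ) (g : Γ) :
    ∑ θ ∈ S, θ g = if g = 1 then (Nat.card Γ : ℂ) else 0 := by
  have := Fintype.ofFinite (Γ →* ℂˣ)
  have hinj : Function.Injective fun (t : Γ →* ℂˣ) (g : Γ) => (t g : ℂ) := fun t t' h =>
    MonoidHom.ext fun g => Units.ext (congrFun h g)
  have hSeq : S = Finset.univ.image fun (t : Γ →* ℂˣ) (g : Γ) => (t g : ℂ) := by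
    ext θ
    simp [hS, isIrrChar_iff_exists_monoidHom, eq_comm]
  rw [hSeq, Finset.sum_image fun t _ t' _ h => hinj h, sum_monoidHom_apply]

lemma eq_zero_of_sum_mul_monoidHom_eq_zero {F : Γ → ℂ}
    (hF : ∀ t : Γ →* ℂˣ, ∑ g, F g * t g = 0) : F = 0 := by
  have := Fintype.ofFinite (Γ →* ℂˣ)
  funext q
  have key : ∑ t : Γ →* ℂˣ, (t q⁻¹ : ℂ) * ∑ g, F g * t g = F q * Nat.card Γ := by
    calc ∑ t : Γ →* ℂˣ, (t q⁻¹ : ℂ) * ∑ g, F g * t g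
        = ∑ g, F g * ∑ t : Γ →* ℂˣ, (t (q⁻¹ * g) : ℂ) := by
          simp only [Finset.mul_sum, map_mul, Units.val_mul]
          rw [Finset.sum_comm]
          exact Finset.sum_congr rfl fun _ _ => Finset.sum_congr rfl fun _ _ => by ring
      _ = F q * Nat.card Γ := by
          simp only [sum_monoidHom_apply, inv_mul_eq_one, mul_ite, mul_zero, Finset.sum_ite_eq,
            Finset.mem_univ, if_true]
  simp only [hF, mul_zero, Finset.sum_const_zero] at key
  exact (mul_eq_zero.mp key.symm).resolve_right (Nat.cast_ne_zero.mpr Nat.card_pos.ne')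

end CommGroup

lemma indSub_apply_eq_zero_of_notMem {Γ : Type} [Group Γ] [Fintype Γ] {K : Subgroup Γ}
    [hK : K.Normal] (ψ : Γ → ℂ) {g : Γ} (hg : g ∉ K) : indSub K ψ g = 0 := by
  refine mul_eq_zero_of_right _ (Finset.sum_eq_zero fun x _ => if_neg fun h => hg ?_)
  simpa [mul_assoc] using hK.conj_mem _ h x

section SemidirectProduct

open SemidirectProduct

variable {N H : Type} [CommGroup N] [Group H] {φ : H →* MulAut N}

lemma inv_mul_inl_mul (x : N ⋊[φ] H) (n : N) : x⁻¹ * inl n * x = inl (φ x.right⁻¹ n) := by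
  ext
  · simp [mul_comm]
  · simp

lemma sum_semidirectProduct [Fintype N] [Fintype H] {M : Type} [AddCommMonoid M]
    (f : N ⋊[φ] H → M) : ∑ x, f x = ∑ h, ∑ n, f ⟨n, h⟩ := by
  rw [← Equiv.sum_comp equivProd.symm, Fintype.sum_prod_type, Finset.sum_comm]
  rfl

lemma indSub_range_inl_apply_inl [Fintype N] [Fintype H] (ψ : N ⋊[φ] H → ℂ) (n : N) :
    indSub (inl : N →* N ⋊[φ] H).range ψ (inl n) = ∑ h : H, ψ (inl (φ h n)) := by
  have hcard : Nat.card (inl : N →* N ⋊[φ] H).range = Fintype.card N := by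
    rw [← Nat.card_eq_fintype_card,
      Nat.card_congr (MonoidHom.ofInjective (inl_injective (φ := φ))).toEquiv]
  have hsum : ∑ x : N ⋊[φ] H, ψ (inl (φ x.right⁻¹ n)) =
      Fintype.card N * ∑ h : H, ψ (inl (φ h n)) := by
    rw [sum_semidirectProduct, ← Equiv.sum_comp (Equiv.inv H), Finset.mul_sum]
    simp
  simp only [indSub, inv_mul_inl_mul]
  rw [Finset.sum_congr rfl fun x _ => if_pos ⟨_, rfl⟩, hsum, hcard]
  field_simp

end SemidirectProduct

lemma sum_units_apply_ofAdd_mul {F : Type} [Field F] [Fintype F] (t : Multiplicative F →* ℂˣ)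
    (ht : t ≠ 1) (a : F) :
    ∑ u : Fˣ, (t (.ofAdd (u * a)) : ℂ) = if a = 0 then (Fintype.card F : ℂ) - 1 else -1 := by
  split_ifs with ha
  · simp [ha, Fintype.card_units, Nat.cast_sub Fintype.card_pos]
  have htotal : ∑ x : F, (t (.ofAdd x) : ℂ) = 0 :=
    (Equiv.sum_comp Multiplicative.ofAdd _).trans <|
      sum_hom_units_eq_zero ((Units.coeHom ℂ).comp t) fun h =>
        ht <| MonoidHom.ext fun x => Units.ext (DFunLike.congr_fun h x)
  have hsplit : ∑ x : F, (t (.ofAdd x) : ℂ) = 1 + ∑ u : Fˣ, (t (.ofAdd (u : F)) : ℂ) := by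
    rw [← Fintype.sum_subtype_add_sum_subtype (· = 0), ← Equiv.sum_comp unitsEquivNeZero.symm]
    simp only [Fintype.sum_unique, unitsEquivNeZero_symm_apply, Units.val_mk0, add_left_inj]
    exact congrArg Units.val (map_one t)
  rw [← Equiv.sum_comp (Equiv.mulRight (Units.mk0 a ha)⁻¹)]
  simp only [Equiv.coe_mulRight, Units.val_mul, Units.val_inv_eq_inv_val, Units.val_mk0,
    inv_mul_cancel_right₀ ha]
  linear_combination htotal - hsplit

section Gp

open SemidirectProduct CategoryTheory

variable {p : ℕ} [Fact p.Prime]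

lemma eq_inl_of_right_eq_one {g : Gp p} (hg : g.right = 1) : g = inl g.left := by
  ext <;> simp [hg]

lemma indSub_range_inl_apply_of_right_ne_one (ψ : Gp p → ℂ) {g : Gp p} (hg : g.right ≠ 1) :
    indSub (inl : Multiplicative (ZMod p) →* Gp p).range ψ g = 0 := by
  rw [range_inl_eq_ker_rightHom]
  exact indSub_apply_eq_zero_of_notMem ψ (by simpa using hg)

lemma indSub_one_apply (g : Gp p) :
    indSub (inl : Multiplicative (ZMod p) →* Gp p).range (fun _ => 1) g =
      if g.right = 1 then (p : ℂ) - 1 else 0 := by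
  split_ifs with hg
  · rw [eq_inl_of_right_eq_one hg, indSub_range_inl_apply_inl]
    simp [Nat.totient_prime Fact.out, Nat.cast_sub (Fact.out : p.Prime).one_le]
  · exact indSub_range_inl_apply_of_right_ne_one _ hg

def psiR (p : ℕ) (g : Gp p) : ℂ :=
  if g.right = 1 then if g.left = 1 then (p : ℂ) - 1 else -1 else 0

lemma indSub_eq_psiR (t : Multiplicative (ZMod p) →* ℂˣ) (ht : t ≠ 1) :
    indSub (inl : Multiplicative (ZMod p) →* Gp p).range (fun g => (t g.left : ℂ)) = psiR p := by
  funext g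
  by_cases hg : g.right = 1
  · rw [eq_inl_of_right_eq_one hg, indSub_range_inl_apply_inl]
    simp only [left_inl, psiR, right_inl, if_true]
    convert sum_units_apply_ofAdd_mul t ht g.left.toAdd using 3
    · rfl
    · simp only [toAdd_eq_zero, ZMod.card]; congr
  · simp [indSub_range_inl_apply_of_right_ne_one _ hg, psiR, hg]

lemma character_inl_eq_of_ne_one (V : FDRep ℂ (Gp p)) {z : Multiplicative (ZMod p)}
    (hz : z ≠ 1) : V.character (inl z) = V.character (inl (.ofAdd 1)) := by
  have hz0 : z.toAdd ≠ 0 := by simpa using hz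
  have hz' : mulAction p (Units.mk0 z.toAdd hz0) (.ofAdd 1) = z := by simp [mulAction]
  rw [← hz', inl_aut, map_inv, FDRep.char_conj]

lemma character_mk_eq (V : FDRep ℂ (Gp p)) {u : (ZMod p)ˣ} (hu : u ≠ 1)
    (z z' : Multiplicative (ZMod p)) : V.character ⟨z, u⟩ = V.character ⟨z', u⟩ := by
  have hu' : (1 : ZMod p) - u ≠ 0 := sub_ne_zero.mpr fun h => hu (Units.ext h.symm)
  -- conjugation by `inl w` translates the `Z_p`-coordinate by `(1 - u) w`
  let w : ZMod p := (z'.toAdd - z.toAdd) / (1 - u)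
  have hconj : inl (.ofAdd w) * (⟨z, u⟩ : Gp p) * (inl (.ofAdd w))⁻¹ = ⟨z', u⟩ := by
    ext
    · simp only [mul_left, mul_right, inv_left, left_inl, right_inl, map_one,
        MulAut.one_apply, one_mul, inv_one]
      apply Multiplicative.toAdd.injective
      change w + z.toAdd + u * -w = z'.toAdd
      linear_combination (mul_div_cancel₀ (z'.toAdd - z.toAdd) hu')
    · simp
  rw [← hconj, FDRep.char_conj]

lemma character_eq_psiR (hp2 : p ≠ 2) (V : FDRep ℂ (Gp p)) [Simple V]
    (hV : V.character 1 = p - 1) : V.character = psiR p := by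
  have hV1 : V.character 1 ≠ 1 := fun h => hp2 <| by
    exact_mod_cast (show (p : ℂ) = 2 by linear_combination h - hV)
  have hfiber : (fun u => ∑ z, V.character ⟨z, u⟩) = 0 :=
    eq_zero_of_sum_mul_monoidHom_eq_zero fun t => by
      simpa [sum_semidirectProduct, Finset.sum_mul] using
        sum_character_mul_monoidHom_eq_zero V hV1 (t.comp rightHom)
  have hp0 : (p : ℂ) ≠ 0 := Nat.cast_ne_zero.mpr (Fact.out : p.Prime).ne_zero
  have hoff (z : Multiplicative (ZMod p)) {u : (ZMod p)ˣ} (hu : u ≠ 1) :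
      V.character ⟨z, u⟩ = 0 := by
    have := congrFun hfiber u
    simp only [character_mk_eq V hu _ z, Finset.sum_const, Finset.card_univ,
      Fintype.card_multiplicative, ZMod.card, nsmul_eq_mul, Pi.zero_apply] at this
    exact (mul_eq_zero.mp this).resolve_left hp0
  have hon : V.character (inl (.ofAdd 1)) = -1 := by
    set a := V.character (inl (.ofAdd 1))
    have hterm (z : Multiplicative (ZMod p)) :
        V.character ⟨z, 1⟩ = a + if z = 1 then (p - 1 : ℂ) - a else 0 := by
      split_ifs with hz
      · subst hz
        simpa using hV
      · simpa using character_inl_eq_of_ne_one V hz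
    have hsum := congrFun hfiber 1
    simp only [hterm, Finset.sum_add_distrib, Finset.sum_ite_eq', Finset.mem_univ, if_true,
      Finset.sum_const, Finset.card_univ, Fintype.card_multiplicative, ZMod.card, nsmul_eq_mul,
      Pi.zero_apply] at hsum
    have hp1 : (p : ℂ) - 1 ≠ 0 :=
      sub_ne_zero.mpr <| by exact_mod_cast (Fact.out : p.Prime).ne_one
    have : ((p : ℂ) - 1) * (a + 1) = 0 := by linear_combination hsum
    linear_combination (mul_eq_zero.mp this).resolve_left hp1
  funext ⟨z, u⟩
  by_cases hu : u = 1
  · subst hu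
    by_cases hz : z = 1
    · subst hz
      simpa [psiR] using hV
    · simpa [psiR, hz, ← hon] using character_inl_eq_of_ne_one V hz
  · exact (hoff z hu).trans (if_neg hu).symm

end Gp

/-- The character of `G` induced from the trivial character of the normal
subgroup `Z_p` equals the sum of the `p − 1` linear irreducible characters of `G`
(which are the pullbacks along the canonical projection `G → H` of the irreducible
characters of `H = (ZMod p)ˣ`); and for every nontrivial irreducible character `η` of
`Z_p ≅ ZMod p`, the induced character `Ind_{Z_p}^G η` equals `ψ_r`, the unique
irreducible character of `G` of degree `p − 1` (in particular it is irreducible). -/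
theorem statement3 (p : ℕ) [Fact p.Prime] (hp2 : p ≠ 2)
    (Zp : Subgroup (Gp p))
    (hZp : Zp = (SemidirectProduct.inl : Multiplicative (ZMod p) →* Gp p).range) :
    (∀ S : Finset ((ZMod p)ˣ → ℂ), (∀ θ, θ ∈ S ↔ IsIrrChar ((ZMod p)ˣ) θ) →
      indSub Zp (fun _ => 1) =
        fun g => ∑ θ ∈ S, θ (SemidirectProduct.rightHom g)) ∧
    (∀ η : Multiplicative (ZMod p) → ℂ, IsIrrChar (Multiplicative (ZMod p)) η →
      η ≠ (fun _ => 1) →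
      ∀ ψr : Gp p → ℂ, IsIrrChar (Gp p) ψr → ψr 1 = (p : ℂ) - 1 →
        indSub Zp (fun g => η g.left) = ψr) := by
  subst hZp
  refine ⟨fun S hS => funext fun g => ?_, fun η hη hη1 ψr hψr hψr1 => ?_⟩
  · rw [indSub_one_apply, sum_isIrrChar_apply S hS, Nat.card_eq_fintype_card, ZMod.card_units,
      Nat.cast_sub (Fact.out : p.Prime).one_le, Nat.cast_one,
      SemidirectProduct.rightHom_eq_right]
    congr
  · obtain ⟨t, rfl⟩ := isIrrChar_iff_exists_monoidHom.mp hη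
    have ht : t ≠ 1 := fun h => hη1 (by simp [h])
    obtain ⟨V, _, rfl⟩ := hψr
    rw [indSub_eq_psiR t ht]
    exact (character_eq_psiR hp2 V hψr1).symm
end BrGrFormal
end
end

section
/- The restriction of ψ_r to the complement H = (ZMod p)ˣ of Z_p in G equals the sum of all irreducible characters of H: Res^G_H(ψ_r) = Σ_{θ ∈ Irr(H)} θ. Equivalently, (Res^G_H ψ_r)(h) = p−1 if h = 1 and 0 otherwise. -/
/-!
A simple representation `V` of `G = ZMod p ⋊ (ZMod p)ˣ` of dimension `≠ 1` is orthogonal to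
every linear character `θ ∘ π` pulled back from `H = (ZMod p)ˣ`; by Fourier inversion on the
abelian group `H`, every fibre sum `∑ z, χ_V (z, u)` therefore vanishes. For `u ≠ 1` all the
elements `(z, u)` are conjugate to `(0, u)`, since `w ↦ (1 - u) w` is onto `ZMod p`, so that
fibre sum is `p · χ_V (0, u)`.
-/

open scoped Classical

noncomputable section

namespace BrGrFormal

section Characters

variable {k G : Type} [Field k] [Group G]

def lineRep (χ : G →* kˣ) : Representation k G k where
  toFun g := (χ g : k) • (1 : k →ₗ[k] k)
  map_one' := by simp
  map_mul' g h := by simp only [map_mul, Units.val_mul, smul_mul_smul_comm, mul_one]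

@[simp]
lemma character_lineRep (χ : G →* kˣ) (g : G) :
    (FDRep.of (lineRep χ)).character g = χ g := by
  change LinearMap.trace k k ((χ g : k) • 1) = χ g
  simp

end Characters

open CategoryTheory

section Orthogonality

variable {G : Type} [Group G] [Fintype G]

instance simple_lineRep (χ : G →* ℂˣ) : Simple (FDRep.of (lineRep χ)) := by
  rw [FDRep.simple_iff_char_is_norm_one]
  simp

lemma sum_character_mul_inv_eq_zero (V : FDRep ℂ G) [Simple V]
    (hV : Module.finrank ℂ V ≠ 1) (χ : G →* ℂˣ) :
    ∑ g, V.character g * (χ g⁻¹ : ℂ) = 0 := by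
  have : Invertible (Nat.card G : ℂ) := invertibleOfNonzero (NeZero.ne _)
  have hnot : ¬ Nonempty (V ≅ FDRep.of (lineRep χ)) := fun ⟨i⟩ ↦
    hV (by simpa using congrFun (FDRep.char_iso i) 1)
  simpa [hnot] using FDRep.char_orthonormal V (FDRep.of (lineRep χ))

end Orthogonality

section Duality

variable {H : Type} [CommGroup H] [Finite H]

instance hasEnoughRootsOfUnity_exponent : HasEnoughRootsOfUnity ℂ (Monoid.exponent H) :=
  have : NeZero (Monoid.exponent H : ℂ) := ⟨by exact_mod_cast Monoid.exponent_ne_zero_of_finite⟩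
  inferInstance

lemma sum_monoidHom_apply_eq_zero [Fintype (H →* ℂˣ)] {y : H} (hy : y ≠ 1) :
    ∑ θ : H →* ℂˣ, (θ y : ℂ) = 0 := by
  obtain ⟨φ, hφ⟩ := CommGroup.exists_apply_ne_one_of_hasEnoughRootsOfUnity H ℂ hy
  refine eq_zero_of_mul_eq_self_left (b := (φ y : ℂ)) (by rwa [Ne, Units.val_eq_one]) ?_
  simp only [Finset.mul_sum, ← Units.val_mul, ← MonoidHom.mul_apply]
  exact Fintype.sum_bijective _ (Group.mulLeft_bijective φ) _ _ fun _ ↦ rfl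

lemma eq_zero_of_forall_sum_mul_inv_eq_zero [Fintype H] {c : H → ℂ}
    (hc : ∀ θ : H →* ℂˣ, ∑ h, c h * (θ h⁻¹ : ℂ) = 0) : c = 0 := by
  let _ : Fintype (H →* ℂˣ) := .ofFinite _
  funext h₀
  have hcard : (Fintype.card (H →* ℂˣ) : ℂ) ≠ 0 := by exact_mod_cast Fintype.card_ne_zero
  refine (mul_eq_zero.mp ?_).resolve_right hcard
  calc c h₀ * Fintype.card (H →* ℂˣ) = ∑ h, c h * ∑ θ : H →* ℂˣ, (θ (h₀ * h⁻¹) : ℂ) := by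
        rw [Finset.sum_eq_single h₀ (fun h _ hne ↦ ?_) (by simp)]
        · simp
        · rw [sum_monoidHom_apply_eq_zero (by simpa [mul_inv_eq_one] using hne.symm), mul_zero]
    _ = ∑ θ : H →* ℂˣ, θ h₀ * ∑ h, c h * (θ h⁻¹ : ℂ) := by
        simp only [Finset.mul_sum, map_mul, Units.val_mul]
        rw [Finset.sum_comm]
        exact Finset.sum_congr rfl fun _ _ ↦ Finset.sum_congr rfl fun _ _ ↦ by ring
    _ = 0 := by simp only [hc, mul_zero, Finset.sum_const_zero]

end Duality

section SemidirectProduct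

variable {N H : Type} [Group N] [CommGroup H] [Fintype N] [Fintype H] {φ : H →* MulAut N}

lemma sum_character_mk_eq_zero (V : FDRep ℂ (N ⋊[φ] H)) [Simple V]
    (hV : Module.finrank ℂ V ≠ 1) (u : H) : ∑ n : N, V.character ⟨n, u⟩ = 0 := by
  suffices (fun u ↦ ∑ n : N, V.character ⟨n, u⟩) = 0 from congrFun this u
  refine eq_zero_of_forall_sum_mul_inv_eq_zero fun θ ↦ ?_
  rw [← sum_character_mul_inv_eq_zero V hV (θ.comp SemidirectProduct.rightHom),
    ← SemidirectProduct.equivProd.symm.sum_comp, Fintype.sum_prod_type, Finset.sum_comm]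
  simp [Finset.sum_mul, SemidirectProduct.equivProd]

end SemidirectProduct

section Gp

variable {p : ℕ}

open SemidirectProduct

lemma inl_mul_inr_mul_inl_inv (w : ZMod p) (u : (ZMod p)ˣ) :
    (inl (.ofAdd w) * inr u * (inl (.ofAdd w))⁻¹ : Gp p) = ⟨.ofAdd ((1 - u) * w), u⟩ := by
  ext
  · simp only [mul_left, inv_left, left_inl, left_inr, right_inl, right_inr, mul_right]
    simp [mulAction, Units.smul_def]
    ring
  · simp

lemma character_mk_eq_character_inr [Fact p.Prime] (V : FDRep ℂ (Gp p)) {u : (ZMod p)ˣ}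
    (hu : u ≠ 1) (z : Multiplicative (ZMod p)) : V.character ⟨z, u⟩ = V.character (inr u) := by
  have hu' : (1 - u : ZMod p) ≠ 0 := sub_ne_zero.mpr (by simpa [eq_comm] using hu)
  have := inl_mul_inr_mul_inl_inv ((1 - u : ZMod p)⁻¹ * z.toAdd) u
  rw [← mul_assoc, mul_inv_cancel₀ hu', one_mul, ofAdd_toAdd] at this
  rw [← this, FDRep.char_conj]

end Gp

/-- The restriction of `ψ_r` to the complement `H = (ZMod p)ˣ` of `Z_p` in
`G` equals the sum of all irreducible characters of `H`; equivalently,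
`(Res^G_H ψ_r) h = p − 1` if `h = 1` and `0` otherwise. -/
theorem statement4 (p : ℕ) [Fact p.Prime] (hp2 : p ≠ 2) (ψr : Gp p → ℂ)
    (h1 : IsIrrChar (Gp p) ψr) (h2 : ψr 1 = (p : ℂ) - 1) :
    ∀ h : (ZMod p)ˣ,
      ψr (SemidirectProduct.inr h) = if h = 1 then (p : ℂ) - 1 else 0 := by
  obtain ⟨V, hV, rfl⟩ := h1
  have hdim : Module.finrank ℂ V ≠ 1 := fun hdim ↦ hp2 <| by
    have : (1 : ℂ) = p - 1 := by simpa [hdim] using h2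
    exact_mod_cast (eq_sub_iff_add_eq.mp this).symm.trans one_add_one_eq_two
  intro h
  split_ifs with hh
  · simpa [hh] using h2
  · have hsum := sum_character_mk_eq_zero V hdim h
    simp_rw [character_mk_eq_character_inr V hh] at hsum
    simpa [Fact.out (p := p.Prime) |>.ne_zero] using hsum
end BrGrFormal
end
end

section
/- For every i ∈ I and every π ∈ Equiv.Perm (Fin k): Σ_{f : Fin k → H} ψ̃_r^k(f; π) · conj(θ̃_i^k(f; π)) = (p−1)^k. -/
open scoped Classical

noncomputable section

namespace BrGrFormal

/-! ### Wreath products -/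

/-- The permutation action on the base group of a wreath product. -/
def permAut (N : Type) [Group N] (k : ℕ) : Equiv.Perm (Fin k) →* MulAut (Fin k → N) where
  toFun σ :=
    { toFun := fun f => f ∘ σ.symm
      invFun := fun f => f ∘ σ
      left_inv := fun f => by ext j; simp
      right_inv := fun f => by ext j; simp
      map_mul' := fun f g => rfl }
  map_one' := by ext f j; rfl
  map_mul' := fun σ τ => by ext f j; rfl

/-- The wreath product `N ≀ S_k`. -/
abbrev Wr (N : Type) [Group N] (k : ℕ) := (Fin k → N) ⋊[permAut N k] Equiv.Perm (Fin k)

/-- The map between wreath products induced by a homomorphism of base groups. -/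
def wrMap {N M : Type} [Group N] [Group M] (ν : N →* M) (k : ℕ) : Wr N k →* Wr M k where
  toFun g := ⟨fun j => ν (g.left j), g.right⟩
  map_one' := by ext j <;> simp [permAut]
  map_mul' := fun a b => by
    ext j
    · exact map_mul ν (a.left j) (b.left (a.right.symm j))
    · rfl

/-- The set of minimal representatives of the orbits (cycles) of a permutation;
its cardinality is the number `c(π)` of orbits of `π`, fixed points included. -/
def orbitReps {k : ℕ} (π : Equiv.Perm (Fin k)) : Finset (Fin k) :=
  Finset.univ.filter fun x => ∀ y : Fin k, π.SameCycle x y → x ≤ y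

/-- The orbit of `x` under (the cyclic group generated by) `π`, as a finset. -/
def orbitOf {k : ℕ} (π : Equiv.Perm (Fin k)) (x : Fin k) : Finset (Fin k) :=
  Finset.univ.filter fun y => π.SameCycle x y

/-- The cycle product `f j * f (π⁻¹ j) * ⋯ * f (π^{-(m-1)} j)` of `(f ; π)` along the
orbit of `j`, where `m` is the cardinality of this orbit. -/
def cycleProd {N : Type} [Group N] {k : ℕ} (f : Fin k → N) (π : Equiv.Perm (Fin k))
    (j : Fin k) : N :=
  (((List.range (orbitOf π j).card)).map fun t => f ((π ^ t)⁻¹ j)).prod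

/-- The class function `ψ̃^k` on `N ≀ S_k` attached to a class function `ψ` on `N`:
`(f ; π) ↦ ∏_{orbits O of π} ψ (cycle product of (f;π) along O)`. -/
def cycleCF {N : Type} [Group N] {k : ℕ} (ψ : N → ℂ) : Wr N k → ℂ :=
  fun g => ∏ x ∈ orbitReps g.right, ψ (cycleProd g.left g.right x)

/-- The linear character `ψ̃^k : (f;π) ↦ ∏_j ψ (f j)` of `N ≀ S_k` attached to a linear
character `ψ` of `N`. -/
def prodCF {N : Type} [Group N] {k : ℕ} (ψ : N → ℂ) : Wr N k → ℂ :=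
  fun g => ∏ j, ψ (g.left j)

/-- The linear character `θ̃^k : (f;π) ↦ θ (∏_j f j)` of `N ≀ S_k` attached to a linear
character `θ` of an abelian group `N`; it coincides with `prodCF θ`. -/
def thetaTilde {N : Type} [CommGroup N] {k : ℕ} (θ : N → ℂ) : Wr N k → ℂ :=
  fun g => θ (∏ j, g.left j)

/-- The class function `(f;π) ↦ a (π)` on `N ≀ S_k` attached to a class function `a`
on `S_k` (denoted `φ_a`, resp. `ζ_a`, in the paper). -/
def permCF {N : Type} [Group N] {k : ℕ} (a : Equiv.Perm (Fin k) → ℂ) : Wr N k → ℂ :=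
  fun g => a g.right

/-! The character `ψ_r` vanishes on `H ∖ {1}`. Indeed, by Schur's lemma the sum of `ρ` over the
normal subgroup `Z_p` is a scalar, and this scalar is `0` since `Z_p` acts nontrivially (otherwise
`ρ` factors through the abelian group `H` and has degree `1 ≠ p - 1`); as every element of the coset
`u Z_p` is conjugate to `u ≠ 1`, this gives `p ψ_r(u) = 0`. Hence a summand is nonzero only if all
cycle products of `f` are `1`, and then `∏ f = 1`, so the `θ`-factor is `1`. Replacing the value of
`f` at the least point of each orbit by the product of `f` over that orbit is a bijection of
`Fin k → H`, so the sum equals `ψ_r(1)^c(π) · |H|^(k - c(π)) = (p - 1)^k`. -/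

end BrGrFormal

open CategoryTheory Module

theorem sum_pi_prod_apply {ι N R : Type*} [Fintype ι] [DecidableEq ι] [Fintype N]
    [CommSemiring R] (s : Finset ι) (a : N → R) :
    ∑ g : ι → N, ∏ x ∈ s, a (g x) =
      (∑ u, a u) ^ s.card * Fintype.card N ^ (Fintype.card ι - s.card) := by
  have hfactor : ∀ j, (∑ u, if j ∈ s then a u else 1) =
      if j ∈ s then ∑ u, a u else (Fintype.card N : R) := fun j => by
    split_ifs <;> simp
  calc ∑ g : ι → N, ∏ x ∈ s, a (g x)
      = ∑ g : ι → N, ∏ j, if j ∈ s then a (g j) else 1 := by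
        simp_rw [Finset.prod_ite_mem, Finset.univ_inter]
    _ = ∏ j, ∑ u, if j ∈ s then a u else 1 :=
        (Fintype.prod_sum fun j (u : N) => if j ∈ s then a u else 1).symm
    _ = (∑ u, a u) ^ s.card * Fintype.card N ^ (Fintype.card ι - s.card) := by
        rw [Finset.prod_congr rfl fun j _ => hfactor j, Finset.prod_ite]
        simp only [Finset.subset_univ, Finset.filter_mem_eq_of_subset, Finset.prod_const,
          ← Finset.card_compl, Finset.compl_eq_univ_sdiff, Finset.filter_notMem_eq_sdiff]

namespace FDRep

variable {Γ : Type} [Group Γ] (V : FDRep ℂ Γ)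

theorem exists_eq_smul_one_of_commute [Simple V] (L : V →ₗ[ℂ] V)
    (hL : ∀ g, Commute L (V.ρ g)) : ∃ c : ℂ, L = c • 1 := by
  let φ : V ⟶ V := ⟨ObjectProperty.homMk (ModuleCat.ofHom L), fun g => by
    ext v; exact LinearMap.congr_fun (hL g) v⟩
  obtain ⟨c, hc⟩ := endomorphism_simple_eq_smul_id ℂ φ
  exact ⟨c, congrArg (fun ψ : V ⟶ V => ψ.hom.hom.hom) hc.symm⟩

theorem nontrivial_of_simple [Simple V] : Nontrivial V := by
  by_contra h
  rw [not_nontrivial_iff_subsingleton] at h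
  exact id_nonzero V (by ext v; exact Subsingleton.elim _ _)

-- If all `ρ g` commute, they are scalars by Schur, so every endomorphism of `V` is a scalar.
theorem finrank_eq_one_of_forall_commute [Simple V] (h : ∀ g g', Commute (V.ρ g) (V.ρ g')) :
    finrank ℂ V = 1 := by
  have hEnd : ∀ L : Module.End ℂ V, ∃ c : ℂ, c • 1 = L := by
    intro L
    refine (exists_eq_smul_one_of_commute V L fun g => ?_).imp fun c hc => hc.symm
    obtain ⟨d, hd⟩ := exists_eq_smul_one_of_commute V (V.ρ g) (h g)
    rw [hd, Commute, SemiconjBy, mul_smul_comm, smul_mul_assoc, mul_one, one_mul]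
  have hle : finrank ℂ V * finrank ℂ V ≤ 1 := by
    rw [← Module.finrank_linearMap ℂ ℂ]
    exact finrank_le_one 1 hEnd
  have := nontrivial_of_simple V
  have hpos : 0 < finrank ℂ V := Module.finrank_pos
  nlinarith

theorem sum_ρ_eq_zero_of_normal [Simple V] (N : Subgroup Γ) [N.Normal] [Fintype N]
    (hN : ∃ n ∈ N, V.ρ n ≠ 1) : ∑ n : N, V.ρ n = 0 := by
  have hcomm : ∀ g, Commute (∑ n : N, V.ρ n) (V.ρ g) := fun g => by
    rw [Commute, SemiconjBy, Finset.sum_mul, Finset.mul_sum]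
    refine (Fintype.sum_equiv (MulAut.conjNormal g).toEquiv _ _ fun n => ?_).symm
    simp [← map_mul]
  obtain ⟨c, hc⟩ := exists_eq_smul_one_of_commute V _ hcomm
  obtain ⟨n, hn, hne⟩ := hN
  have hfix : V.ρ n * ∑ m : N, V.ρ m = ∑ m : N, V.ρ m := by
    rw [Finset.mul_sum]
    exact Fintype.sum_equiv (Equiv.mulLeft ⟨n, hn⟩) _ _ fun m => (map_mul _ _ _).symm
  rw [hc, mul_smul_comm, mul_one] at hfix
  obtain rfl : c = 0 := by
    by_contra hc0
    exact hne (smul_right_injective _ hc0 hfix)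
  rw [hc, zero_smul]

theorem sum_character_mul_eq_zero_of_normal [Simple V] (N : Subgroup Γ) [N.Normal] [Fintype N]
    (hN : ∃ n ∈ N, V.ρ n ≠ 1) (g : Γ) : ∑ n : N, V.character (g * n) = 0 := by
  have := congrArg (fun L => LinearMap.trace ℂ V (V.ρ g * L)) (sum_ρ_eq_zero_of_normal V N hN)
  simpa [Finset.mul_sum, map_sum, FDRep.character] using this

end FDRep

namespace BrGrFormal

section Orbits

open Function

variable {k : ℕ}

theorem mem_orbitOf {π : Equiv.Perm (Fin k)} {x y : Fin k} :
    y ∈ orbitOf π x ↔ π.SameCycle x y := by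
  simp [orbitOf]

theorem mem_orbitReps {π : Equiv.Perm (Fin k)} {x : Fin k} :
    x ∈ orbitReps π ↔ ∀ y, π.SameCycle x y → x ≤ y := by
  simp [orbitReps]

theorem eq_of_mem_orbitReps {π : Equiv.Perm (Fin k)} {x y : Fin k} (hx : x ∈ orbitReps π)
    (hy : y ∈ orbitReps π) (h : π.SameCycle x y) : x = y :=
  le_antisymm (mem_orbitReps.mp hx y h) (mem_orbitReps.mp hy x h.symm)

theorem notMem_orbitReps_of_mem_erase_orbitOf {π : Equiv.Perm (Fin k)} {x y : Fin k}
    (hx : x ∈ orbitReps π) (hy : y ∈ (orbitOf π x).erase x) : y ∉ orbitReps π := fun hy' =>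
  (Finset.mem_erase.mp hy).1
    (eq_of_mem_orbitReps hx hy' (mem_orbitOf.mp (Finset.mem_erase.mp hy).2)).symm

theorem mem_orbitOf_self (π : Equiv.Perm (Fin k)) (x : Fin k) : x ∈ orbitOf π x :=
  mem_orbitOf.mpr (Equiv.Perm.SameCycle.refl π x)

theorem exists_mem_orbitReps_sameCycle (π : Equiv.Perm (Fin k)) (j : Fin k) :
    ∃ x ∈ orbitReps π, π.SameCycle x j := by
  have hmin := mem_orbitOf.mp ((orbitOf π j).min'_mem ⟨j, mem_orbitOf_self π j⟩)
  refine ⟨_, mem_orbitReps.mpr fun y hy => ?_, hmin.symm⟩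
  exact (orbitOf π j).min'_le y (mem_orbitOf.mpr (hmin.trans hy))

-- The list in `cycleProd` is the periodic orbit of `x` under `π⁻¹`, which has no repetitions.
theorem cycleProd_eq_prod_orbitOf {N : Type} [CommGroup N] (f : Fin k → N)
    (π : Equiv.Perm (Fin k)) (x : Fin k) : cycleProd f π x = ∏ y ∈ orbitOf π x, f y := by
  set L := (List.range (minimalPeriod (⇑π⁻¹) x)).map fun n => (⇑π⁻¹)^[n] x
  have hnodup : L.Nodup := Cycle.nodup_coe_iff.mp nodup_periodicOrbit
  have horbit : orbitOf π x = L.toFinset := by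
    ext y
    rw [List.mem_toFinset, ← Cycle.mem_coe_iff, ← periodicOrbit_def,
      mem_periodicOrbit_iff (π⁻¹.injective.mem_periodicPts x), mem_orbitOf,
      ← Equiv.Perm.sameCycle_inv]
    simp only [Equiv.Perm.iterate_eq_pow]
    exact ⟨fun h => h.exists_nat_pow_eq, fun ⟨n, hn⟩ => ⟨n, by simpa using hn⟩⟩
  have hcard : (orbitOf π x).card = minimalPeriod (⇑π⁻¹) x := by
    rw [horbit, List.toFinset_card_of_nodup hnodup, List.length_map, List.length_range]
  rw [cycleProd, hcard, horbit, List.prod_toFinset _ hnodup, List.map_map]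
  congr 1

theorem prod_eq_prod_orbitReps_cycleProd {N : Type} [CommGroup N] (π : Equiv.Perm (Fin k))
    (f : Fin k → N) : ∏ j, f j = ∏ x ∈ orbitReps π, cycleProd f π x := by
  have hcover : (orbitReps π).biUnion (orbitOf π) = Finset.univ :=
    Finset.eq_univ_of_forall fun j => Finset.mem_biUnion.mpr <|
      (exists_mem_orbitReps_sameCycle π j).imp fun _ ⟨hx, hxj⟩ => ⟨hx, mem_orbitOf.mpr hxj⟩
  have hdisj : (orbitReps π : Set (Fin k)).PairwiseDisjoint (orbitOf π) :=
    fun x hx y hy hxy => Finset.disjoint_left.mpr fun j hjx hjy => hxy <|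
      eq_of_mem_orbitReps hx hy ((mem_orbitOf.mp hjx).trans (mem_orbitOf.mp hjy).symm)
  rw [← hcover, Finset.prod_biUnion hdisj]
  exact Finset.prod_congr rfl fun x _ => (cycleProd_eq_prod_orbitOf f π x).symm

def orbitProdEquiv (π : Equiv.Perm (Fin k)) (N : Type) [CommGroup N] :
    (Fin k → N) ≃ (Fin k → N) where
  toFun f j := if j ∈ orbitReps π then ∏ y ∈ orbitOf π j, f y else f j
  invFun g j := if j ∈ orbitReps π then g j / ∏ y ∈ (orbitOf π j).erase j, g y else g j
  left_inv f := by
    funext j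
    dsimp only
    split_ifs with hj
    · rw [Finset.prod_congr rfl fun y hy => if_neg (notMem_orbitReps_of_mem_erase_orbitOf hj hy),
        ← Finset.mul_prod_erase _ _ (mem_orbitOf_self π j), mul_div_cancel_right]
    · rfl
  right_inv g := by
    funext j
    dsimp only
    split_ifs with hj
    · rw [← Finset.mul_prod_erase _ _ (mem_orbitOf_self π j), if_pos hj,
        Finset.prod_congr rfl fun y hy => if_neg (notMem_orbitReps_of_mem_erase_orbitOf hj hy),
        div_mul_cancel]
    · rfl

theorem sum_prod_cycleProd (π : Equiv.Perm (Fin k)) {N : Type} [CommGroup N] [Fintype N]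
    (a : N → ℂ) : ∑ f : Fin k → N, ∏ x ∈ orbitReps π, a (cycleProd f π x) =
      (∑ u, a u) ^ (orbitReps π).card * Fintype.card N ^ (k - (orbitReps π).card) := by
  calc ∑ f : Fin k → N, ∏ x ∈ orbitReps π, a (cycleProd f π x)
      = ∑ f : Fin k → N, ∏ x ∈ orbitReps π, a (orbitProdEquiv π N f x) :=
        Finset.sum_congr rfl fun f _ => Finset.prod_congr rfl fun x hx => by
          rw [cycleProd_eq_prod_orbitOf, orbitProdEquiv, Equiv.coe_fn_mk, if_pos hx]
    _ = ∑ g : Fin k → N, ∏ x ∈ orbitReps π, a (g x) :=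
        Equiv.sum_comp (orbitProdEquiv π N) fun g => ∏ x ∈ orbitReps π, a (g x)
    _ = _ := by rw [sum_pi_prod_apply, Fintype.card_fin]

end Orbits

theorem cycleCF_map {N M : Type} [Group N] [Group M] {k : ℕ} (ψ : M → ℂ) (ν : N →* M)
    (f : Fin k → N) (π : Equiv.Perm (Fin k)) :
    cycleCF ψ (⟨fun j => ν (f j), π⟩ : Wr M k) = ∏ x ∈ orbitReps π, ψ (ν (cycleProd f π x)) := by
  refine Finset.prod_congr rfl fun x _ => ?_
  rw [cycleProd, cycleProd, map_list_prod, List.map_map]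
  rfl

theorem prod_cycleProd_mul_conj_eq {N : Type} [CommGroup N] {k : ℕ} {a θ : N → ℂ}
    (ha : ∀ u ≠ 1, a u = 0) (hθ : θ 1 = 1) (f : Fin k → N) (π : Equiv.Perm (Fin k)) :
    (∏ x ∈ orbitReps π, a (cycleProd f π x)) * starRingEnd ℂ (θ (∏ j, f j)) =
      ∏ x ∈ orbitReps π, a (cycleProd f π x) := by
  by_cases h : ∀ x ∈ orbitReps π, cycleProd f π x = 1
  · rw [prod_eq_prod_orbitReps_cycleProd π f, Finset.prod_eq_one h, hθ, map_one, mul_one]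
  · push Not at h
    obtain ⟨x, hx, hne⟩ := h
    rw [Finset.prod_eq_zero hx (ha _ hne), zero_mul]

open SemidirectProduct

theorem mulAction_apply (p : ℕ) (u : (ZMod p)ˣ) (z : Multiplicative (ZMod p)) :
    mulAction p u z = Multiplicative.ofAdd ((u : ZMod p) * z.toAdd) := rfl

theorem isConj_inr_inr_mul_inl {p : ℕ} [Fact p.Prime] {u : (ZMod p)ˣ} (hu : u ≠ 1)
    (z : Multiplicative (ZMod p)) : IsConj (inr u : Gp p) (inr u * inl z) := by
  have hu' : (1 : ZMod p) - u ≠ 0 := sub_ne_zero.mpr fun h => hu (Units.ext h.symm)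
  -- `inl a * inr u * (inl a)⁻¹ = inl ((1 - u) a) * inr u = inr u * inl (u⁻¹ (1 - u) a)`
  refine isConj_iff.mpr ⟨inl (Multiplicative.ofAdd (((1 : ZMod p) - u)⁻¹ * (u * z.toAdd))), ?_⟩
  ext
  · refine Multiplicative.toAdd.injective (α := ZMod p) ?_
    simp only [mul_left, inv_left, left_inl, right_inl, left_inr, right_inr, mul_right, map_one,
      MulAut.one_apply, mul_one, one_mul, inv_one, mulAction_apply, toAdd_inv, toAdd_ofAdd,
      toAdd_mul, mul_neg, ofAdd_neg]
    congr 1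
    field_simp
    ring
  · simp

theorem exists_mem_ker_rightHom_ρ_ne_one {p : ℕ} (V : FDRep ℂ (Gp p)) [Simple V]
    (hV : finrank ℂ V ≠ 1) : ∃ n ∈ (rightHom : Gp p →* (ZMod p)ˣ).ker, V.ρ n ≠ 1 := by
  by_contra! h
  have hfactor : ∀ g : Gp p, V.ρ g = V.ρ (inr g.right) := fun g => by
    conv_lhs => rw [← inl_left_mul_inr_right g]
    rw [map_mul, h _ (by simp), one_mul]
  refine hV (FDRep.finrank_eq_one_of_forall_commute V fun g g' => ?_)
  rw [hfactor g, hfactor g']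
  exact ((Commute.all g.right g'.right).map inr).map V.ρ

theorem character_inr_eq_zero {p : ℕ} [Fact p.Prime] (V : FDRep ℂ (Gp p)) [Simple V]
    (hV : finrank ℂ V ≠ 1) {u : (ZMod p)ˣ} (hu : u ≠ 1) : V.character (inr u) = 0 := by
  have hsum := FDRep.sum_character_mul_eq_zero_of_normal V _
    (exists_mem_ker_rightHom_ρ_ne_one V hV) (inr u)
  have hconst : ∀ n : (rightHom : Gp p →* (ZMod p)ˣ).ker,
      V.character ((inr u : Gp p) * n) = V.character (inr u) := fun n => by
    obtain ⟨c, hc⟩ := isConj_iff.mp (isConj_inr_inr_mul_inl hu n.1.left)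
    have hn : (n : Gp p) = inl n.1.left := by
      have hright : n.1.right = 1 := n.2
      conv_lhs => rw [← inl_left_mul_inr_right n.1]
      rw [hright, map_one, mul_one]
    rw [hn, ← hc, FDRep.char_conj]
  rw [Finset.sum_congr rfl fun n _ => hconst n, Finset.sum_const, nsmul_eq_mul] at hsum
  exact (mul_eq_zero.mp hsum).resolve_left
    (by rw [Finset.card_univ]; exact_mod_cast Fintype.card_ne_zero)

theorem statement10_general (p : ℕ) [Fact p.Prime] (hp2 : p ≠ 2) (k : ℕ)
    (θi : (ZMod p)ˣ → ℂ) (hθi : IsIrrChar ((ZMod p)ˣ) θi)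
    (ψr : Gp p → ℂ) (h1 : IsIrrChar (Gp p) ψr) (h2 : ψr 1 = (p : ℂ) - 1)
    (π : Equiv.Perm (Fin k)) :
    ∑ f : Fin k → (ZMod p)ˣ,
        cycleCF ψr (⟨fun j => SemidirectProduct.inr (f j), π⟩ : Wr (Gp p) k) *
          (starRingEnd ℂ) (thetaTilde θi (⟨f, π⟩ : Wr ((ZMod p)ˣ) k)) =
      ((p : ℂ) - 1) ^ k := by
  obtain ⟨V, _, rfl⟩ := h1
  obtain ⟨W, _, rfl⟩ := hθi
  beta_reduce at h2
  have hV : finrank ℂ V ≠ 1 := fun h => hp2 <| by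
    rw [FDRep.char_one, h] at h2
    exact_mod_cast (by linear_combination -h2 : (p : ℂ) = 2)
  have hψ : ∀ u ≠ 1, V.character (inr u) = 0 := fun u hu => character_inr_eq_zero V hV hu
  have hθ : W.character 1 = 1 := by
    rw [FDRep.char_one,
      FDRep.finrank_eq_one_of_forall_commute W fun g g' => (Commute.all g g').map W.ρ, Nat.cast_one]
  have hsum : ∑ u, V.character (inr u) = p - 1 := by
    rw [Fintype.sum_eq_single 1 hψ, map_one, h2]
  have hcard : (Fintype.card (ZMod p)ˣ : ℂ) = p - 1 := by
    rw [ZMod.card_units, Nat.cast_sub (Fact.out : p.Prime).one_le, Nat.cast_one]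
  simp only [cycleCF_map, thetaTilde, prod_cycleProd_mul_conj_eq hψ hθ]
  rw [sum_prod_cycleProd π fun u => V.character (inr u), hsum, hcard, ← pow_add,
    Nat.add_sub_cancel' ((orbitReps π).card_le_univ.trans_eq (Fintype.card_fin k))]

/-- For every irreducible character `θ_i` of `H = (ZMod p)ˣ` and every
permutation `π` of `Fin k`:
`∑_{f : Fin k → H} ψ̃_r^k (f ; π) ⬝ conj (θ̃_i^k (f ; π)) = (p−1)^k`. -/
theorem statement10 (p : ℕ) [Fact p.Prime] (hp2 : p ≠ 2) (k : ℕ) (hk : 1 ≤ k)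
    (θi : (ZMod p)ˣ → ℂ) (hθi : IsIrrChar ((ZMod p)ˣ) θi)
    (ψr : Gp p → ℂ) (h1 : IsIrrChar (Gp p) ψr) (h2 : ψr 1 = (p : ℂ) - 1)
    (π : Equiv.Perm (Fin k)) :
    ∑ f : Fin k → (ZMod p)ˣ,
        cycleCF ψr (⟨fun j => SemidirectProduct.inr (f j), π⟩ : Wr (Gp p) k) *
          (starRingEnd ℂ) (thetaTilde θi (⟨f, π⟩ : Wr ((ZMod p)ˣ) k)) =
      ((p : ℂ) - 1) ^ k :=
  statement10_general p hp2 k θi hθi ψr h1 h2 π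
end BrGrFormal
end
end
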